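/- If V*_C satisfies |dV*_C(ċ)| ≤ K√(g-1)·‖ċ‖_{WP} along all tangent directions, V_C = V*_C + (1/2)L_m(l), and 0 ≤ L_m(l) ≤ 6π|χ(∂M)|, then V_C(M) ≤ K√(g-1)·d_{WP}(c₋,c₊) + 3π|χ(∂M)| whenever V*_C vanishes when c₋ = c₊ (i.e., at the Fuchsian locus along a connecting geodesic). -/
import Mathlib

open Real

/-- Mazzoli's bound combined with Bridgeman–Brock–Bromberg: if the dual volume
`V*_C` along a Weil–Petersson geodesic from `c₋` to `c₊` of length `d`
(parametrized with constant speed `d` on `[0,1]`) satisfies the differential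
bound `|dV*_C| ≤ K√(g-1)·‖ċ‖_{WP}`, vanishes at the Fuchsian starting point,
and `V_C = V*_C + (1/2)L` with `0 ≤ L ≤ 6π|χ(∂M)|`, then
`V_C ≤ K√(g-1)·d_{WP}(c₋,c₊) + 3π|χ(∂M)|`. -/
theorem convex_core_volume_bound (Vstar : ℝ → ℝ) (K g d L χa VC : ℝ)
    (hK : 0 ≤ K) (hg : 1 ≤ g) (hd : 0 ≤ d) (hχ : 0 ≤ χa)
    (hderiv : ∀ t ∈ Set.Icc (0 : ℝ) 1, HasDerivAt Vstar (deriv Vstar t) t)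
    (hbound : ∀ t ∈ Set.Icc (0 : ℝ) 1,
      |deriv Vstar t| ≤ K * Real.sqrt (g - 1) * d)
    (h0 : Vstar 0 = 0)
    (hL0 : 0 ≤ L) (hL : L ≤ 6 * π * χa)
    (hVC : VC = Vstar 1 + (1 / 2) * L) :
    VC ≤ K * Real.sqrt (g - 1) * d + 3 * π * χa := by
  have hconv : Convex ℝ (Set.Icc (0 : ℝ) 1) := convex_Icc 0 1
  have key : ‖Vstar 1 - Vstar 0‖ ≤ K * Real.sqrt (g - 1) * d * ‖(1 : ℝ) - 0‖ := by
    apply hconv.norm_image_sub_le_of_norm_deriv_le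
      (fun t ht => (hderiv t ht).differentiableAt)
    · intro t ht
      simpa [Real.norm_eq_abs] using hbound t ht
    · exact Set.left_mem_Icc.2 zero_le_one
    · exact Set.right_mem_Icc.2 zero_le_one
  have h1 : Vstar 1 ≤ K * Real.sqrt (g - 1) * d := by
    have := key
    rw [h0, sub_zero] at this
    simp only [norm_sub_rev, sub_zero, norm_one, mul_one] at this
    calc Vstar 1 ≤ |Vstar 1| := le_abs_self _
      _ ≤ K * Real.sqrt (g - 1) * d := by simpa [Real.norm_eq_abs] using this
  have h2 : (1 / 2) * L ≤ 3 * π * χa := by nlinarith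
  linarith [h1, h2]
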